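/- With the MERA setup below, for every operator O_{AR} ∈ B(H_A ⊗ H_R), tr[ρ_0^{AR} O_{AR}] = tr[ρ_s^{A_sR} (Φ_A ⊗ id_R)(O_{AR})], where ρ_0^{AR} = tr_B |ρ_0⟩⟨ρ_0|, ρ_s^{A_sR} = tr_{B_s} |ρ_s⟩⟨ρ_s|, and Φ_A ⊗ id_R is the linear map determined by (Φ_A ⊗ id_R)(O_A ⊗ O_R) = Φ_A(O_A) ⊗ O_R. -/

import Mathlib

open scoped Kronecker ComplexOrder Matrix Classical

/-- The operator norm of a matrix, i.e. the norm of the induced linear map on Euclidean space. -/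
noncomputable def opNorm {n : Type} [Fintype n] [DecidableEq n] (A : Matrix n n ℂ) : ℝ :=
  ‖Matrix.toEuclideanCLM (𝕜 := ℂ) A‖

/-- The positive semidefinite square root of a positive semidefinite matrix
(the definition Mathlib had, since removed). -/
noncomputable def Matrix.PosSemidef.sqrt {n : Type} [Fintype n] [DecidableEq n]
    {A : Matrix n n ℂ} (hA : A.PosSemidef) : Matrix n n ℂ :=
  (hA.1.eigenvectorUnitary : Matrix n n ℂ) *
    Matrix.diagonal ((↑) ∘ (Real.sqrt ·) ∘ hA.1.eigenvalues) *
    (star hA.1.eigenvectorUnitary : Matrix n n ℂ)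

/-- The positive-semidefinite square root (junk value `0` off the PSD cone). -/
noncomputable def psdSqrt {n : Type} [Fintype n] [DecidableEq n] (A : Matrix n n ℂ) :
    Matrix n n ℂ :=
  if h : A.PosSemidef then h.sqrt else 0

/-- The trace norm `‖A‖₁ = tr √(AᴴA)`. -/
noncomputable def traceNorm {n : Type} [Fintype n] [DecidableEq n] (A : Matrix n n ℂ) : ℝ :=
  ((psdSqrt (Aᴴ * A)).trace).re

/-- Fidelity `F(ρ,σ) = tr √(√ρ σ √ρ)`. -/
noncomputable def fidelity {n : Type} [Fintype n] [DecidableEq n] (ρ σ : Matrix n n ℂ) : ℝ :=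
  ((psdSqrt (psdSqrt ρ * σ * psdSqrt ρ)).trace).re

/-- Bures distance `𝔅(ρ,σ) = √(2(1 − F(ρ,σ)))`. -/
noncomputable def bures {n : Type} [Fintype n] [DecidableEq n] (ρ σ : Matrix n n ℂ) : ℝ :=
  Real.sqrt (2 * (1 - fidelity ρ σ))

/-- The rank-one projector `|ψ⟩⟨ψ|`. -/
def outer {n : Type} [Fintype n] (ψ : n → ℂ) : Matrix n n ℂ :=
  Matrix.of fun i j => ψ i * (starRingEnd ℂ) (ψ j)

/-- Complete positivity of a linear map between matrix algebras: for every `k`, the map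
`id_{M_k} ⊗ Φ` (acting blockwise) preserves positive semidefiniteness. -/
def IsCompletelyPositive {n m : Type} [Fintype n] [DecidableEq n] [Fintype m] [DecidableEq m]
    (Φ : Matrix n n ℂ →ₗ[ℂ] Matrix m m ℂ) : Prop :=
  ∀ (k : ℕ) (M : Matrix (Fin k × n) (Fin k × n) ℂ), M.PosSemidef →
    (Matrix.of fun (p q : Fin k × m) =>
      (Φ (Matrix.of fun a b => M (p.1, a) (q.1, b))) p.2 q.2).PosSemidef

/-!
Reshape a vector `ψ` on `(X × Y) × R` (system `X × Y`, reference `R`) into the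
`(X × Y) × R` matrix `Ψ`.
Then `tr[(tr_Y |ψ⟩⟨ψ|) O] = ∑_{r,r'} (Ψᴴ (O_{r'r} ⊗ 1_Y) Ψ)_{r'r}`, so the reference system only
labels the blocks `O_{r'r}` of `O`. Since the purification of `ρ_0` reshapes to `V Ψ_s`, each term
is `Ψ_sᴴ Vᴴ (O_{r'r} ⊗ 1_B) V Ψ_s = Ψ_sᴴ (Φ_A(O_{r'r}) ⊗ 1_{B_s}) Ψ_s` by locality, and the
blocks of `(Φ_A ⊗ id_R)(O)` are exactly the `Φ_A(O_{r'r})`.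
-/

namespace Matrix

variable {α X Y R : Type}

def partialTraceMid [AddCommMonoid α] [Fintype Y] (M : Matrix ((X × Y) × R) ((X × Y) × R) α) :
    Matrix (X × R) (X × R) α :=
  of fun p q => ∑ y, M ((p.1, y), p.2) ((q.1, y), q.2)

def blockAt (O : Matrix (X × R) (X × R) α) (r r' : R) : Matrix X X α :=
  of fun a b => O (a, r) (b, r')

/-- `Φ ⊗ id_R` -/
def ampliation {X' : Type} (Φ : Matrix X X α → Matrix X' X' α) (O : Matrix (X × R) (X × R) α) :
    Matrix (X' × R) (X' × R) α :=
  of fun p q => Φ (blockAt O p.2 q.2) p.1 q.1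

theorem blockAt_ampliation {X' : Type} (Φ : Matrix X X α → Matrix X' X' α)
    (O : Matrix (X × R) (X × R) α) (r r' : R) :
    blockAt (ampliation Φ O) r r' = Φ (blockAt O r r') :=
  rfl

theorem of_curry_kronecker_one_mulVec {m n : Type} [Fintype n] [Fintype R] [DecidableEq R]
    [Semiring α] (V : Matrix m n α) (ψ : n × R → α) :
    of (Function.curry ((V ⊗ₖ (1 : Matrix R R α)) *ᵥ ψ)) = V * of (Function.curry ψ) := by
  ext i r
  simp [mulVec, dotProduct, mul_apply, Fintype.sum_prod_type, one_apply]

theorem trace_partialTraceMid_outer_mul [Fintype X] [Fintype Y] [Fintype R] [DecidableEq Y]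
    (ψ : (X × Y) × R → ℂ) (O : Matrix (X × R) (X × R) ℂ) :
    (partialTraceMid (outer ψ) * O).trace =
      ∑ r, ∑ r', ((of (Function.curry ψ))ᴴ * (blockAt O r' r ⊗ₖ (1 : Matrix Y Y ℂ)) *
        of (Function.curry ψ)) r' r := by
  simp only [trace, diag_apply, mul_apply, conjTranspose_apply, kroneckerMap_apply, one_apply,
    of_apply, partialTraceMid, blockAt, outer, Fintype.sum_prod_type, mul_ite, mul_one, mul_zero,
    Finset.sum_ite_eq', Finset.mem_univ, if_true, Function.curry_apply, Finset.sum_mul,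
    starRingEnd_apply]
  rw [Finset.sum_comm]
  refine Finset.sum_congr rfl fun r _ => ?_
  conv_lhs => enter [2, a]; rw [Finset.sum_comm]
  rw [Finset.sum_comm]
  refine Finset.sum_congr rfl fun r' _ => Finset.sum_congr rfl fun a _ => ?_
  rw [Finset.sum_comm]
  refine Finset.sum_congr rfl fun y _ => Finset.sum_congr rfl fun a' _ => ?_
  ring

end Matrix

open Matrix

theorem mera_renormalization_identity_general
    {A B As Bs : Type} [Fintype A] [Fintype B] [DecidableEq B]
    [Fintype As] [DecidableEq As] [Fintype Bs] [DecidableEq Bs]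
    -- the MERA isometry `V : H_s → H_0` and its locality (causal cone) property
    (V : Matrix (A × B) (As × Bs) ℂ)
    (ΦA : Matrix A A ℂ →ₗ[ℂ] Matrix As As ℂ)
    (hloc : ∀ OA : Matrix A A ℂ,
      Vᴴ * (OA ⊗ₖ (1 : Matrix B B ℂ)) * V = ΦA OA ⊗ₖ (1 : Matrix Bs Bs ℂ))
    -- the code state data: a density matrix on `H_s` and a unitary on the purifying space
    (ρs : Matrix (As × Bs) (As × Bs) ℂ) (hρ : ρs.PosSemidef)
    (U : Matrix (As × Bs) (As × Bs) ℂ)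
    (OAR : Matrix (A × (As × Bs)) (A × (As × Bs)) ℂ) :
    -- the maximally entangled vector `|Ω⟩ = ∑ i |i⟩⊗|i⟩`
    let Ω : (As × Bs) × (As × Bs) → ℂ := fun p => if p.1 = p.2 then 1 else 0
    -- the purified code states `|ρ_s⟩` and `|ρ_0⟩`
    let ρsVec : (As × Bs) × (As × Bs) → ℂ := (hρ.sqrt ⊗ₖ U).mulVec Ω
    let ρ0Vec : (A × B) × (As × Bs) → ℂ :=
      (V ⊗ₖ (1 : Matrix (As × Bs) (As × Bs) ℂ)).mulVec ρsVec
    -- `ρ_0^{AR} = tr_B |ρ_0⟩⟨ρ_0|` and `ρ_s^{A_sR} = tr_{B_s} |ρ_s⟩⟨ρ_s|`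
    let ρ0AR : Matrix (A × (As × Bs)) (A × (As × Bs)) ℂ :=
      Matrix.of fun p q => ∑ b : B, outer ρ0Vec ((p.1, b), p.2) ((q.1, b), q.2)
    let ρsAsR : Matrix (As × (As × Bs)) (As × (As × Bs)) ℂ :=
      Matrix.of fun p q => ∑ b : Bs, outer ρsVec ((p.1, b), p.2) ((q.1, b), q.2)
    -- the extension `Φ_A ⊗ id_R`, acting blockwise
    let ΦAR : Matrix (A × (As × Bs)) (A × (As × Bs)) ℂ →
        Matrix (As × (As × Bs)) (As × (As × Bs)) ℂ :=
      fun O => Matrix.of fun p q =>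
        (ΦA (Matrix.of fun a b => O (a, p.2) (b, q.2))) p.1 q.1
    (ρ0AR * OAR).trace = (ρsAsR * ΦAR OAR).trace := by
  intro Ω ρsVec ρ0Vec ρ0AR ρsAsR ΦAR
  have hreshape : of (Function.curry ρ0Vec) = V * of (Function.curry ρsVec) :=
    of_curry_kronecker_one_mulVec V ρsVec
  have hcompress : ∀ (Ψ : Matrix (As × Bs) (As × Bs) ℂ) (OA : Matrix A A ℂ),
      (V * Ψ)ᴴ * (OA ⊗ₖ (1 : Matrix B B ℂ)) * (V * Ψ) = Ψᴴ * (ΦA OA ⊗ₖ 1) * Ψ := by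
    intro Ψ OA
    rw [conjTranspose_mul, ← hloc]
    simp only [Matrix.mul_assoc]
  change (partialTraceMid (outer ρ0Vec) * OAR).trace =
    (partialTraceMid (outer ρsVec) * ampliation ΦA OAR).trace
  simp only [trace_partialTraceMid_outer_mul, blockAt_ampliation, hreshape, hcompress]

/-- Renormalization identity: with `|ρ_s⟩ = (√ρ_s ⊗ U)|Ω⟩` and
`|ρ_0⟩ = (V ⊗ 1_R)|ρ_s⟩`, for every `O_{AR} ∈ B(H_A ⊗ H_R)` one has
`tr[ρ_0^{AR} O_{AR}] = tr[ρ_s^{A_sR} (Φ_A ⊗ id_R)(O_{AR})]`. -/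
theorem mera_renormalization_identity
    {A B As Bs : Type} [Fintype A] [DecidableEq A] [Fintype B] [DecidableEq B]
    [Fintype As] [DecidableEq As] [Fintype Bs] [DecidableEq Bs]
    -- the MERA isometry `V : H_s → H_0` and its locality (causal cone) property
    (V : Matrix (A × B) (As × Bs) ℂ) (hV : Vᴴ * V = 1)
    (ΦA : Matrix A A ℂ →ₗ[ℂ] Matrix As As ℂ)
    (hloc : ∀ OA : Matrix A A ℂ,
      Vᴴ * (OA ⊗ₖ (1 : Matrix B B ℂ)) * V = ΦA OA ⊗ₖ (1 : Matrix Bs Bs ℂ))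
    -- the code state data: a density matrix on `H_s` and a unitary on the purifying space
    (ρs : Matrix (As × Bs) (As × Bs) ℂ) (hρ : ρs.PosSemidef) (hρtr : ρs.trace = 1)
    (U : Matrix (As × Bs) (As × Bs) ℂ) (hU : U ∈ Matrix.unitaryGroup (As × Bs) ℂ)
    (OAR : Matrix (A × (As × Bs)) (A × (As × Bs)) ℂ) :
    -- the maximally entangled vector `|Ω⟩ = ∑ i |i⟩⊗|i⟩`
    let Ω : (As × Bs) × (As × Bs) → ℂ := fun p => if p.1 = p.2 then 1 else 0
    -- the purified code states `|ρ_s⟩` and `|ρ_0⟩`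
    let ρsVec : (As × Bs) × (As × Bs) → ℂ := (hρ.sqrt ⊗ₖ U).mulVec Ω
    let ρ0Vec : (A × B) × (As × Bs) → ℂ :=
      (V ⊗ₖ (1 : Matrix (As × Bs) (As × Bs) ℂ)).mulVec ρsVec
    -- `ρ_0^{AR} = tr_B |ρ_0⟩⟨ρ_0|` and `ρ_s^{A_sR} = tr_{B_s} |ρ_s⟩⟨ρ_s|`
    let ρ0AR : Matrix (A × (As × Bs)) (A × (As × Bs)) ℂ :=
      Matrix.of fun p q => ∑ b : B, outer ρ0Vec ((p.1, b), p.2) ((q.1, b), q.2)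
    let ρsAsR : Matrix (As × (As × Bs)) (As × (As × Bs)) ℂ :=
      Matrix.of fun p q => ∑ b : Bs, outer ρsVec ((p.1, b), p.2) ((q.1, b), q.2)
    -- the extension `Φ_A ⊗ id_R`, acting blockwise
    let ΦAR : Matrix (A × (As × Bs)) (A × (As × Bs)) ℂ →
        Matrix (As × (As × Bs)) (As × (As × Bs)) ℂ :=
      fun O => Matrix.of fun p q =>
        (ΦA (Matrix.of fun a b => O (a, p.2) (b, q.2))) p.1 q.1
    (ρ0AR * OAR).trace = (ρsAsR * ΦAR OAR).trace :=
  mera_renormalization_identity_general V ΦA hloc ρs hρ U OAR
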